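/- There exists a constant C > 0 such that for all t with 0 < t ≤ π/4 and all x, y ∈ ℝ with x ≠ y, |∫_0^1 λ^{−1/2} K_t(x,y,λ) dλ| ≤ C·|x − y|^{−1}. -/

import Mathlib

open MeasureTheory Real

/-- `D = sinh²(2λ) + sin²(2t)`. -/
noncomputable def Dfun (t l : ℝ) : ℝ := Real.sinh (2*l)^2 + Real.sin (2*t)^2

/-- `2A_t(x,y,λ) = D^{−1} sinh(2λ) {cos(2t)(x−y)² + (cosh 2λ − cos 2t)(x² + y²)}`. -/
noncomputable def Afun (t x y l : ℝ) : ℝ :=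
  (Real.sinh (2*l) * (Real.cos (2*t) * (x - y)^2
    + (Real.cosh (2*l) - Real.cos (2*t)) * (x^2 + y^2))) / (2 * Dfun t l)

/-- `2B_t(x,y,λ) = −D^{−1} sinh(2t) {cosh(2λ)(x−y)² − (cosh 2λ − cos 2t)(x² + y²)}`. -/
noncomputable def Bfun (t x y l : ℝ) : ℝ :=
  -(Real.sinh (2*t) * (Real.cosh (2*l) * (x - y)^2
    - (Real.cosh (2*l) - Real.cos (2*t)) * (x^2 + y^2))) / (2 * Dfun t l)

/-- `K_t(x,y,λ) = (sinh(2(λ − it)))^{−1} e^{−A_t(x,y,λ)}`. -/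
noncomputable def Kfun (t x y l : ℝ) : ℂ :=
  (Complex.sinh (2 * ((l:ℂ) - Complex.I * (t:ℂ))))⁻¹ * Complex.exp (-(Afun t x y l : ℂ))

lemma abs_sinh_eq (t l : ℝ) :
    ‖Complex.sinh (2 * ((l:ℂ) - Complex.I * (t:ℂ)))‖ = Real.sqrt (Dfun t l) := by
  have h : 2 * ((l:ℂ) - Complex.I * (t:ℂ)) = ((2*l : ℝ):ℂ) - ((2*t:ℝ):ℂ) * Complex.I := by
    push_cast; ring
  rw [h, Complex.sinh_sub, Complex.cosh_mul_I, Complex.sinh_mul_I,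
    ← Complex.ofReal_sinh, ← Complex.ofReal_cosh, ← Complex.ofReal_cos, ← Complex.ofReal_sin]
  rw [Complex.norm_def, Complex.normSq_apply]
  simp only [Complex.sub_re, Complex.sub_im, Complex.mul_re, Complex.mul_im,
    Complex.ofReal_re, Complex.ofReal_im, Complex.I_re, Complex.I_im]
  congr 1
  have h1 := Real.cosh_sq (2*l)
  have h2 := Real.sin_sq_add_cos_sq (2*t)
  unfold Dfun
  nlinarith [h1, h2]

lemma sinh_le_mul_exp {u : ℝ} (hu : 0 ≤ u) : Real.sinh u ≤ u * Real.exp u := by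
  have h1 : (-(2*u)) + 1 ≤ Real.exp (-(2*u)) := Real.add_one_le_exp _
  have h2 : Real.exp (-(2*u)) = Real.exp (-u) * Real.exp (-u) := by
    rw [← Real.exp_add]; ring_nf
  have h3 : Real.exp (-u) * Real.exp u = 1 := by rw [← Real.exp_add]; simp
  have h4 := Real.exp_pos u
  have h5 := Real.exp_pos (-u)
  rw [Real.sinh_eq]
  nlinarith [h1, h2, h3]

lemma aux_m2 (u v : ℝ) (h : 1 - Real.cos v ≤ Real.cosh u - 1) :
    Real.cosh u - Real.cos v ≤ Real.sinh u ^ 2 := by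
  nlinarith [Real.cosh_sq u, sq_nonneg (Real.cosh u - 1)]

lemma aux_Aa {r2 S l m : ℝ} (hr2 : 0 ≤ r2) (hS : 0 ≤ S) (hS18 : S ≤ 18*l) (hm2 : m ≤ S^2) :
    r2 * (4*m) ≤ S * r2 * (72*l) := by
  nlinarith [mul_nonneg (mul_nonneg hr2 hS) (by linarith : (0:ℝ) ≤ 18*l - S),
    mul_nonneg hr2 (by linarith : (0:ℝ) ≤ S^2 - m)]

set_option maxHeartbeats 1000000 in
lemma pointwise_main {t x y : ℝ} (ht : 0 < t) (ht2 : t ≤ Real.pi/4) (l : ℝ)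
    (hl : 0 < l) (hl1 : l ≤ 1) :
    ‖((l ^ (-(1:ℝ)/2) : ℝ) : ℂ) * Kfun t x y l‖ ≤
      (1/2) * (l ^ (-(3:ℝ)/2) * Real.exp (-(((x-y)^2/72)/l)))
      + (Real.sqrt (1 - Real.cos (2*t)))⁻¹
        * (l ^ (-(1:ℝ)/2) * Real.exp (-(((x-y)^2/(4*(1 - Real.cos (2*t)))) * l))) := by
  have hpi := Real.pi_pos
  have hsin : 0 < Real.sin (2*t) :=
    Real.sin_pos_of_pos_of_lt_pi (by linarith) (by linarith)
  have hcos0 : 0 ≤ Real.cos (2*t) :=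
    Real.cos_nonneg_of_mem_Icc ⟨by linarith, by linarith⟩
  have hcos1 : Real.cos (2*t) < 1 := by
    nlinarith [Real.sin_sq_add_cos_sq (2*t)]
  set s : ℝ := 1 - Real.cos (2*t) with hsdef
  have hs : 0 < s := by simp only [hsdef]; linarith
  have hS : 0 < Real.sinh (2*l) := by rw [Real.sinh_pos_iff]; linarith
  have hS2l : 2*l ≤ Real.sinh (2*l) := Real.self_le_sinh_iff.mpr (by linarith)
  have hexp2 : Real.exp (2*l) ≤ 9 := by
    have h1 : Real.exp (2*l) ≤ Real.exp 2 := Real.exp_le_exp.mpr (by linarith)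
    have h2 : Real.exp 2 = Real.exp 1 * Real.exp 1 := by rw [← Real.exp_add]; norm_num
    nlinarith [Real.exp_one_lt_d9, Real.exp_pos 1]
  have hSle : Real.sinh (2*l) ≤ 18*l := by
    have := sinh_le_mul_exp (by linarith : (0:ℝ) ≤ 2*l)
    nlinarith
  have hcosh1 : 1 ≤ Real.cosh (2*l) := Real.one_le_cosh (2*l)
  have hm : 0 < Real.cosh (2*l) - Real.cos (2*t) := by linarith
  have hp : 0 < Real.cosh (2*l) + Real.cos (2*t) := by linarith
  have hD : Dfun t l = (Real.cosh (2*l) - Real.cos (2*t)) * (Real.cosh (2*l) + Real.cos (2*t)) := by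
    unfold Dfun
    linear_combination (-1) * Real.cosh_sq (2*l) + Real.sin_sq_add_cos_sq (2*t)
  have hDpos : 0 < Dfun t l := by rw [hD]; exact mul_pos hm hp
  have hA1 : Real.sinh (2*l) * (x-y)^2 / (4*(Real.cosh (2*l) - Real.cos (2*t)))
      ≤ Afun t x y l := by
    unfold Afun
    rw [hD, div_le_div_iff₀ (by positivity) (by positivity)]
    nlinarith [mul_nonneg (mul_nonneg hS.le (mul_nonneg hm.le hm.le)) (sq_nonneg (x+y))]
  have hnorm : ‖((l ^ (-(1:ℝ)/2) : ℝ) : ℂ) * Kfun t x y l‖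
      = l ^ (-(1:ℝ)/2) * ((Real.sqrt (Dfun t l))⁻¹ * Real.exp (-(Afun t x y l))) := by
    unfold Kfun
    rw [norm_mul, norm_mul, norm_inv,
      abs_sinh_eq, Complex.norm_real, Real.norm_eq_abs,
      abs_of_nonneg (Real.rpow_nonneg hl.le _), Complex.norm_exp]
    simp
  rw [hnorm]
  rcases le_total (Real.cosh (2*l) - 1) s with hcase | hcase
  · -- s dominates : second term
    have hmle : Real.cosh (2*l) - Real.cos (2*t) ≤ 2*s := by
      simp only [hsdef] at *; linarith
    have hAb : ((x-y)^2/(4*s)) * l ≤ Afun t x y l := by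
      refine le_trans ?_ hA1
      rw [div_mul_eq_mul_div, div_le_div_iff₀ (by positivity) (by positivity)]
      have h1 : l * (Real.cosh (2*l) - Real.cos (2*t)) ≤ Real.sinh (2*l) * s := by
        nlinarith
      nlinarith [mul_le_mul_of_nonneg_left h1 (sq_nonneg (x-y))]
    have hDs : s ≤ Dfun t l := by
      unfold Dfun
      simp only [hsdef]
      nlinarith [mul_nonneg (by linarith [Real.cos_le_one (2*t)] : (0:ℝ) ≤ 1 - Real.cos (2*t))
        hcos0, Real.sin_sq_add_cos_sq (2*t), sq_nonneg (Real.sinh (2*l))]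
    have hsqD : (Real.sqrt (Dfun t l))⁻¹ ≤ (Real.sqrt s)⁻¹ := by
      apply inv_anti₀ (Real.sqrt_pos.2 hs) (Real.sqrt_le_sqrt hDs)
    have key : l ^ (-(1:ℝ)/2) * ((Real.sqrt (Dfun t l))⁻¹ * Real.exp (-(Afun t x y l)))
        ≤ (Real.sqrt s)⁻¹ * (l ^ (-(1:ℝ)/2) * Real.exp (-(((x-y)^2/(4*s)) * l))) := by
      rw [mul_left_comm]
      apply mul_le_mul hsqD ?_ (by positivity) (by positivity)
      apply mul_le_mul_of_nonneg_left ?_ (Real.rpow_nonneg hl.le _)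
      exact Real.exp_le_exp.mpr (by linarith)
    refine le_trans key ?_
    apply le_add_of_nonneg_left
    positivity
  · -- l dominates : first term
    have hm2 : Real.cosh (2*l) - Real.cos (2*t) ≤ Real.sinh (2*l)^2 := by
      simp only [hsdef] at hcase
      exact aux_m2 (2*l) (2*t) hcase
    have hAa : ((x-y)^2/72) / l ≤ Afun t x y l := by
      refine le_trans ?_ hA1
      rw [div_div, div_le_div_iff₀ (by positivity) (by positivity)]
      exact aux_Aa (sq_nonneg (x-y)) hS.le hSle hm2
    have hD4l : (2*l)^2 ≤ Dfun t l := by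
      unfold Dfun
      have h9 := pow_le_pow_left₀ (by linarith : (0:ℝ) ≤ 2*l) hS2l 2
      have h10 := sq_nonneg (Real.sin (2*t))
      linarith
    have hsqD : (Real.sqrt (Dfun t l))⁻¹ ≤ (2*l)⁻¹ := by
      have h1 : 2*l ≤ Real.sqrt (Dfun t l) := by
        rw [show (2*l) = Real.sqrt ((2*l)^2) from (Real.sqrt_sq (by linarith)).symm]
        exact Real.sqrt_le_sqrt hD4l
      exact inv_anti₀ (by linarith) h1
    have key : l ^ (-(1:ℝ)/2) * ((Real.sqrt (Dfun t l))⁻¹ * Real.exp (-(Afun t x y l)))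
        ≤ (1/2) * (l ^ (-(3:ℝ)/2) * Real.exp (-(((x-y)^2/72)/l))) := by
      have h2 : l ^ (-(1:ℝ)/2) * ((2*l)⁻¹ * Real.exp (-(((x-y)^2/72)/l)))
          = (1/2) * (l ^ (-(3:ℝ)/2) * Real.exp (-(((x-y)^2/72)/l))) := by
        have h3 : l ^ (-(1:ℝ)/2) * l⁻¹ = l ^ (-(3:ℝ)/2) := by
          rw [show l⁻¹ = l ^ (-(1:ℝ)) by rw [Real.rpow_neg hl.le, Real.rpow_one],
            ← Real.rpow_add hl]
          norm_num
        rw [mul_inv, ← h3]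
        ring
      rw [← h2]
      apply mul_le_mul_of_nonneg_left ?_ (Real.rpow_nonneg hl.le _)
      apply mul_le_mul hsqD (Real.exp_le_exp.mpr (by linarith)) (Real.exp_pos _).le
        (by positivity)
    refine le_trans key ?_
    apply le_add_of_nonneg_right
    positivity

lemma exp_neg_le_inv {x : ℝ} (hx : 0 < x) : Real.exp (-x) ≤ 1 / x := by
  have h : x ≤ Real.exp x := by nlinarith [Real.add_one_le_exp x]
  rw [Real.exp_neg, inv_eq_one_div, div_le_div_iff₀ (Real.exp_pos x) hx]
  nlinarith

lemma exp_neg_le_sq {x : ℝ} (hx : 0 < x) : Real.exp (-x) ≤ 4 / x^2 := by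
  have h : Real.exp (-x) = Real.exp (-(x/2)) * Real.exp (-(x/2)) := by
    rw [← Real.exp_add]; ring_nf
  have h2 : Real.exp (-(x/2)) ≤ 1/(x/2) := exp_neg_le_inv (by linarith)
  have h3 := Real.exp_pos (-(x/2))
  rw [h]
  calc Real.exp (-(x/2)) * Real.exp (-(x/2)) ≤ (1/(x/2)) * (1/(x/2)) := by
        apply mul_le_mul h2 h2 h3.le (by positivity)
    _ = 4 / x^2 := by field_simp; ring

-- pointwise: for 0 < l, l^(-3/2) * exp(-(a/l)) ≤ (4/a^2) * l^(1/2)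
lemma pointA {a l : ℝ} (ha : 0 < a) (hl : 0 < l) :
    l ^ (-(3:ℝ)/2) * Real.exp (-(a/l)) ≤ (4/a^2) * l ^ ((1:ℝ)/2) := by
  have h1 : Real.exp (-(a/l)) ≤ 4 / (a/l)^2 := exp_neg_le_sq (by positivity)
  have h2 : 4 / (a/l)^2 = (4/a^2) * l^2 := by field_simp
  calc l ^ (-(3:ℝ)/2) * Real.exp (-(a/l)) ≤ l ^ (-(3:ℝ)/2) * ((4/a^2) * l^2) := by
        refine mul_le_mul_of_nonneg_left ?_ (by positivity)
        rw [← h2]; exact h1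
    _ = (4/a^2) * l ^ ((1:ℝ)/2) := by
        rw [show (l:ℝ)^2 = l ^ ((2:ℕ):ℝ) from (Real.rpow_natCast l 2).symm,
          ← mul_assoc, mul_comm (l ^ (-(3:ℝ)/2)), mul_assoc, ← Real.rpow_add hl]
        norm_num

lemma measA (a : ℝ) : Measurable (fun l : ℝ => l ^ (-(3:ℝ)/2) * Real.exp (-(a/l))) := by
  fun_prop


lemma f_zeroA (a : ℝ) : (0:ℝ) ^ (-(3:ℝ)/2) * Real.exp (-(a/0)) = 0 := by
  rw [Real.zero_rpow (by norm_num)]; ring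

lemma boundA_Icc {a : ℝ} (ha : 0 < a) : ∀ l ∈ Set.Icc (0:ℝ) 1,
    l ^ (-(3:ℝ)/2) * Real.exp (-(a/l)) ≤ (4/a^2) * l ^ ((1:ℝ)/2) := by
  intro l hl
  rcases eq_or_lt_of_le hl.1 with h0 | h0
  · rw [← h0, f_zeroA, Real.zero_rpow (by norm_num)]; norm_num
  · exact pointA ha h0

lemma intAble {a : ℝ} (ha : 0 < a) :
    IntervalIntegrable (fun l => l ^ (-(3:ℝ)/2) * Real.exp (-(a/l))) volume 0 1 := by
  rw [intervalIntegrable_iff]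
  apply Measure.integrableOn_of_bounded (M := 4/a^2)
    (by rw [Set.uIoc_of_le (zero_le_one (α := ℝ))]; exact measure_Ioc_lt_top.ne)
    (measA a).aestronglyMeasurable
  rw [Set.uIoc_of_le (zero_le_one (α := ℝ)), ae_restrict_iff' measurableSet_Ioc]
  filter_upwards with l hl
  have h1 : l ^ (-(3:ℝ)/2) * Real.exp (-(a/l)) ≤ (4/a^2) * l ^ ((1:ℝ)/2) :=
    pointA ha hl.1
  have h2 : l ^ ((1:ℝ)/2) ≤ 1 := Real.rpow_le_one hl.1.le hl.2 (by norm_num)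
  have h3 : (0:ℝ) ≤ l ^ (-(3:ℝ)/2) * Real.exp (-(a/l)) :=
    mul_nonneg (Real.rpow_nonneg hl.1.le _) (Real.exp_pos _).le
  rw [Real.norm_eq_abs, abs_of_nonneg h3]
  calc _ ≤ (4/a^2) * l ^ ((1:ℝ)/2) := h1
    _ ≤ 4/a^2 := mul_le_of_le_one_right (by positivity) h2

lemma intA_val {a : ℝ} (ha : 0 < a) :
    ∫ l in (0:ℝ)..1, l ^ (-(3:ℝ)/2) * Real.exp (-(a/l)) ≤ 5 / Real.sqrt a := by
  have hsa : 0 < Real.sqrt a := Real.sqrt_pos.2 ha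
  have hsq : Real.sqrt a * Real.sqrt a = a := Real.mul_self_sqrt ha.le
  have hint := intAble ha
  have hg_int : IntervalIntegrable (fun l : ℝ => (4/a^2) * l ^ ((1:ℝ)/2)) volume 0 1 :=
    (intervalIntegral.intervalIntegrable_rpow' (by norm_num)).const_mul _
  rcases le_total 1 a with hc | hc
  · have h1 : ∫ l in (0:ℝ)..1, l ^ (-(3:ℝ)/2) * Real.exp (-(a/l))
        ≤ ∫ l in (0:ℝ)..1, (4/a^2) * l ^ ((1:ℝ)/2) :=
      intervalIntegral.integral_mono_on zero_le_one hint hg_int (boundA_Icc ha)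
    have h2 : ∫ l in (0:ℝ)..1, (4/a^2) * l ^ ((1:ℝ)/2) = (4/a^2) * (2/3) := by
      rw [intervalIntegral.integral_const_mul, integral_rpow (Or.inl (by norm_num))]
      norm_num
    have h3 : Real.sqrt a ≤ a := by nlinarith
    have h4 : (4/a^2) * (2/3) ≤ 5 / Real.sqrt a := by
      rw [div_mul_eq_mul_div, div_le_div_iff₀ (by positivity) hsa]
      nlinarith
    linarith
  · set f : ℝ → ℝ := fun l => l ^ (-(3:ℝ)/2) * Real.exp (-(a/l)) with hf
    have h0a : IntervalIntegrable f volume 0 a := hint.mono_set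
      (by rw [Set.uIcc_of_le ha.le, Set.uIcc_of_le zero_le_one]
          exact Set.Icc_subset_Icc le_rfl hc)
    have ha1 : IntervalIntegrable f volume a 1 := hint.mono_set
      (by rw [Set.uIcc_of_le hc, Set.uIcc_of_le zero_le_one]
          exact Set.Icc_subset_Icc ha.le le_rfl)
    rw [← intervalIntegral.integral_add_adjacent_intervals h0a ha1]
    have haq : a ^ ((1:ℝ)/2 + 1) = a * Real.sqrt a := by
      rw [show (1:ℝ)/2 + 1 = 1 + 1/2 by norm_num, Real.rpow_add ha, Real.rpow_one,
        ← Real.sqrt_eq_rpow]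
    have I1 : ∫ l in (0:ℝ)..a, f l ≤ (8/3) / Real.sqrt a := by
      have hg0a : IntervalIntegrable (fun l : ℝ => (4/a^2) * l ^ ((1:ℝ)/2)) volume 0 a :=
        hg_int.mono_set (by rw [Set.uIcc_of_le ha.le, Set.uIcc_of_le zero_le_one]
                            exact Set.Icc_subset_Icc le_rfl hc)
      have := intervalIntegral.integral_mono_on ha.le h0a hg0a
        (fun l hl => boundA_Icc ha l ⟨hl.1, hl.2.trans hc⟩)
      have hval : ∫ l in (0:ℝ)..a, (4/a^2) * l ^ ((1:ℝ)/2) = (8/3) / Real.sqrt a := by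
        rw [intervalIntegral.integral_const_mul, integral_rpow (Or.inl (by norm_num)),
          Real.zero_rpow (by norm_num), haq]
        field_simp
        nlinarith
      linarith
    have I2 : ∫ l in (a:ℝ)..1, f l ≤ 2 / Real.sqrt a := by
      have hgint : IntervalIntegrable (fun l : ℝ => l ^ (-(3:ℝ)/2)) volume a 1 :=
        intervalIntegral.intervalIntegrable_rpow
          (Or.inr (by rw [Set.uIcc_of_le hc]; intro h; exact absurd h.1 (by linarith)))
      have hmono := intervalIntegral.integral_mono_on hc ha1 hgint (fun l hl => by
        have hl0 : 0 < l := lt_of_lt_of_le ha hl.1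
        have : Real.exp (-(a/l)) ≤ 1 := Real.exp_le_one_iff.mpr (neg_nonpos.mpr (by positivity))
        calc f l ≤ l ^ (-(3:ℝ)/2) * 1 :=
              mul_le_mul_of_nonneg_left this (Real.rpow_nonneg hl0.le _)
          _ = l ^ (-(3:ℝ)/2) := mul_one _)
      have hval : ∫ l in (a:ℝ)..1, l ^ (-(3:ℝ)/2)
          = (1 ^ (-(3:ℝ)/2 + 1) - a ^ (-(3:ℝ)/2 + 1)) / (-(3:ℝ)/2 + 1) :=
        integral_rpow (Or.inr ⟨by norm_num,
          by rw [Set.uIcc_of_le hc]; intro h; exact absurd h.1 (by linarith)⟩)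
      have hina : a ^ (-(3:ℝ)/2 + 1) = 1 / Real.sqrt a := by
        rw [show -(3:ℝ)/2 + 1 = -(1/2) by norm_num, Real.rpow_neg ha.le,
          ← Real.sqrt_eq_rpow, one_div]
      rw [hval, hina, Real.one_rpow] at hmono
      have : (1 - 1 / Real.sqrt a) / (-(3:ℝ)/2 + 1) = 2 / Real.sqrt a - 2 := by
        field_simp; ring
      rw [this] at hmono
      linarith
    have h5 : (0:ℝ) ≤ 1 / Real.sqrt a := by positivity
    calc (∫ l in (0:ℝ)..a, f l) + ∫ l in (a:ℝ)..1, f l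
        ≤ (8/3) / Real.sqrt a + 2 / Real.sqrt a := add_le_add I1 I2
      _ ≤ 5 / Real.sqrt a := by
          rw [← add_div, div_le_div_iff₀ hsa hsa]
          nlinarith

lemma measB (b : ℝ) : Measurable (fun l : ℝ => l ^ (-(1:ℝ)/2) * Real.exp (-(b*l))) := by
  fun_prop

lemma rpow_half_int : IntervalIntegrable (fun l : ℝ => l ^ (-(1:ℝ)/2)) volume 0 1 :=
  intervalIntegral.intervalIntegrable_rpow' (by norm_num)

lemma intBble {b : ℝ} (hb : 0 < b) :
    IntervalIntegrable (fun l => l ^ (-(1:ℝ)/2) * Real.exp (-(b*l))) volume 0 1 := by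
  apply rpow_half_int.mono_fun (measB b).aestronglyMeasurable
  rw [Set.uIoc_of_le (zero_le_one (α := ℝ))]
  show ∀ᵐ l ∂(volume.restrict (Set.Ioc (0:ℝ) 1)), _ ≤ _
  rw [ae_restrict_iff' measurableSet_Ioc]
  filter_upwards with l hl
  have h0 : (0:ℝ) ≤ l ^ (-(1:ℝ)/2) := Real.rpow_nonneg hl.1.le _
  rw [Real.norm_eq_abs, Real.norm_eq_abs, abs_of_nonneg (mul_nonneg h0 (Real.exp_pos _).le),
    abs_of_nonneg h0]
  exact mul_le_of_le_one_right h0 (Real.exp_le_one_iff.mpr (neg_nonpos.mpr (mul_nonneg hb.le hl.1.le)))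

lemma boundB_Icc {b : ℝ} (hb : 0 < b) : ∀ l ∈ Set.Icc (0:ℝ) 1,
    l ^ (-(1:ℝ)/2) * Real.exp (-(b*l)) ≤ l ^ (-(1:ℝ)/2) := by
  intro l hl
  exact mul_le_of_le_one_right (Real.rpow_nonneg hl.1 _)
    (Real.exp_le_one_iff.mpr (neg_nonpos.mpr (mul_nonneg hb.le hl.1)))

lemma intB_val {b : ℝ} (hb : 0 < b) :
    ∫ l in (0:ℝ)..1, l ^ (-(1:ℝ)/2) * Real.exp (-(b*l)) ≤ 4 / Real.sqrt b := by
  have hsb : 0 < Real.sqrt b := Real.sqrt_pos.2 hb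
  have hsq : Real.sqrt b * Real.sqrt b = b := Real.mul_self_sqrt hb.le
  have hint := intBble hb
  have hval01 : ∫ l in (0:ℝ)..1, l ^ (-(1:ℝ)/2) = 2 := by
    rw [integral_rpow (Or.inl (by norm_num))]
    norm_num [Real.zero_rpow]
  rcases le_total b 1 with hc | hc
  · have h1 := intervalIntegral.integral_mono_on zero_le_one hint rpow_half_int (boundB_Icc hb)
    have h2 : Real.sqrt b ≤ 1 := by nlinarith
    have h3 : (2:ℝ) ≤ 4 / Real.sqrt b := by
      rw [le_div_iff₀ hsb]; nlinarith
    linarith [hval01 ▸ h1]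
  · set c : ℝ := 1/b with hcdef
    have hc0 : 0 < c := by positivity
    have hc1 : c ≤ 1 := by rw [hcdef, div_le_one hb]; exact hc
    set f : ℝ → ℝ := fun l => l ^ (-(1:ℝ)/2) * Real.exp (-(b*l)) with hf
    have h0c : IntervalIntegrable f volume 0 c := hint.mono_set
      (by rw [Set.uIcc_of_le hc0.le, Set.uIcc_of_le zero_le_one]
          exact Set.Icc_subset_Icc le_rfl hc1)
    have hc1int : IntervalIntegrable f volume c 1 := hint.mono_set
      (by rw [Set.uIcc_of_le hc1, Set.uIcc_of_le zero_le_one]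
          exact Set.Icc_subset_Icc hc0.le le_rfl)
    rw [← intervalIntegral.integral_add_adjacent_intervals h0c hc1int]
    have hsc : Real.sqrt c = 1 / Real.sqrt b := by
      rw [hcdef, one_div, Real.sqrt_inv, one_div]
    have I1 : ∫ l in (0:ℝ)..c, f l ≤ 2 / Real.sqrt b := by
      have hg0c : IntervalIntegrable (fun l : ℝ => l ^ (-(1:ℝ)/2)) volume 0 c :=
        rpow_half_int.mono_set (by
          rw [Set.uIcc_of_le hc0.le, Set.uIcc_of_le zero_le_one]
          exact Set.Icc_subset_Icc le_rfl hc1)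
      have hmono := intervalIntegral.integral_mono_on hc0.le h0c hg0c
        (fun l hl => boundB_Icc hb l ⟨hl.1, hl.2.trans hc1⟩)
      have hval : ∫ l in (0:ℝ)..c, l ^ (-(1:ℝ)/2) = 2 * Real.sqrt c := by
        rw [integral_rpow (Or.inl (by norm_num)), Real.zero_rpow (by norm_num),
          show (-(1:ℝ)/2 + 1) = 1/2 by norm_num, ← Real.sqrt_eq_rpow]
        ring
      rw [hval, hsc] at hmono
      calc ∫ l in (0:ℝ)..c, f l ≤ 2 * (1 / Real.sqrt b) := hmono
        _ = 2 / Real.sqrt b := by ring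
    have I2 : ∫ l in (c:ℝ)..1, f l ≤ 2 / Real.sqrt b := by
      have hgint : IntervalIntegrable (fun l : ℝ => (1/b) * l ^ (-(3:ℝ)/2)) volume c 1 :=
        intervalIntegral.intervalIntegrable_rpow
          (Or.inr (by rw [Set.uIcc_of_le hc1]; intro h; exact absurd h.1 (by linarith))) |>.const_mul _
      have hmono := intervalIntegral.integral_mono_on hc1 hc1int hgint (fun l hl => by
        have hl0 : 0 < l := lt_of_lt_of_le hc0 hl.1
        have he : Real.exp (-(b*l)) ≤ 1/(b*l) := exp_neg_le_inv (by positivity)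
        have : f l ≤ l ^ (-(1:ℝ)/2) * (1/(b*l)) :=
          mul_le_mul_of_nonneg_left he (Real.rpow_nonneg hl0.le _)
        calc f l ≤ l ^ (-(1:ℝ)/2) * (1/(b*l)) := this
          _ = (1/b) * (l ^ (-(1:ℝ)/2) * l ^ (-(1:ℝ))) := by
              rw [Real.rpow_neg hl0.le, Real.rpow_one]
              field_simp
          _ = (1/b) * l ^ (-(3:ℝ)/2) := by
              rw [← Real.rpow_add hl0]; norm_num)
      have hval : ∫ l in (c:ℝ)..1, (1/b) * l ^ (-(3:ℝ)/2)
          = (1/b) * ((1 ^ (-(3:ℝ)/2 + 1) - c ^ (-(3:ℝ)/2 + 1)) / (-(3:ℝ)/2 + 1)) := by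
        rw [intervalIntegral.integral_const_mul, integral_rpow (Or.inr ⟨by norm_num,
          by rw [Set.uIcc_of_le hc1]; intro h; exact absurd h.1 (by linarith)⟩)]
      have hcexp : c ^ (-(3:ℝ)/2 + 1) = Real.sqrt b := by
        rw [show -(3:ℝ)/2 + 1 = -(1/2) by norm_num, Real.rpow_neg hc0.le,
          ← Real.sqrt_eq_rpow, hsc]
        field_simp
      rw [hval, hcexp, Real.one_rpow] at hmono
      have heq : (1/b) * ((1 - Real.sqrt b) / (-(3:ℝ)/2 + 1)) = (2 * Real.sqrt b - 2)/b := by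
        field_simp; ring
      rw [heq] at hmono
      calc ∫ l in (c:ℝ)..1, f l ≤ (2 * Real.sqrt b - 2)/b := hmono
        _ ≤ 2 / Real.sqrt b := by
            rw [div_le_div_iff₀ hb hsb]
            nlinarith
    refine le_trans (add_le_add I1 I2) ?_
    rw [← add_div]
    norm_num


set_option maxHeartbeats 1000000 in
theorem oscillating_kernel_estimate_one :
    ∃ C > 0, ∀ t : ℝ, 0 < t → t ≤ Real.pi/4 → ∀ x y : ℝ, x ≠ y →
      ‖∫ l in (0:ℝ)..1, ((l ^ (-(1:ℝ)/2) : ℝ) : ℂ) * Kfun t x y l‖ ≤ C / |x - y| := by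
  refine ⟨40, by norm_num, ?_⟩
  intro t ht ht2 x y hxy
  have hpi := Real.pi_pos
  have hsin : 0 < Real.sin (2*t) :=
    Real.sin_pos_of_pos_of_lt_pi (by linarith) (by linarith)
  have hcos0 : 0 ≤ Real.cos (2*t) :=
    Real.cos_nonneg_of_mem_Icc ⟨by linarith, by linarith⟩
  have hcos1 : Real.cos (2*t) < 1 := by nlinarith [Real.sin_sq_add_cos_sq (2*t)]
  have hs : 0 < 1 - Real.cos (2*t) := by linarith
  have hr : 0 < |x - y| := abs_pos.mpr (sub_ne_zero.mpr hxy)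
  have hne : x - y ≠ 0 := sub_ne_zero.mpr hxy
  have hr2 : 0 < (x-y)^2 := by positivity
  have ha : 0 < (x-y)^2/72 := by positivity
  have hb : 0 < (x-y)^2/(4*(1 - Real.cos (2*t))) := by positivity
  set a : ℝ := (x-y)^2/72 with hadef
  set b : ℝ := (x-y)^2/(4*(1 - Real.cos (2*t))) with hbdef
  set s : ℝ := 1 - Real.cos (2*t) with hsdef
  set G : ℝ → ℝ := fun l => (1/2) * (l ^ (-(3:ℝ)/2) * Real.exp (-(a/l)))
      + (Real.sqrt s)⁻¹ * (l ^ (-(1:ℝ)/2) * Real.exp (-(b*l))) with hGdef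
  have hGint : IntervalIntegrable G volume 0 1 :=
    ((intAble ha).const_mul _).add ((intBble hb).const_mul _)
  set f : ℝ → ℂ := fun l => ((l ^ (-(1:ℝ)/2) : ℝ) : ℂ) * Kfun t x y l with hfdef
  have hbound : ∀ l ∈ Set.Icc (0:ℝ) 1, ‖f l‖ ≤ G l := by
    intro l hl
    rcases eq_or_lt_of_le hl.1 with h0 | h0
    · rw [← h0]
      have hf0 : f 0 = 0 := by
        simp only [hfdef]
        rw [Real.zero_rpow (by norm_num)]
        simp
      rw [hf0, norm_zero]
      simp only [hGdef]
      rw [Real.zero_rpow (by norm_num : -(3:ℝ)/2 ≠ 0), Real.zero_rpow (by norm_num : -(1:ℝ)/2 ≠ 0)]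
      simp
    · exact pointwise_main ht ht2 l h0 hl.2
  have hmeas : AEStronglyMeasurable f (volume.restrict (Set.uIoc (0:ℝ) 1)) := by
    apply Measurable.aestronglyMeasurable
    simp only [hfdef]
    unfold Kfun Afun Dfun
    fun_prop
  have hfint : IntervalIntegrable f volume 0 1 := by
    apply hGint.mono_fun hmeas
    rw [Set.uIoc_of_le (zero_le_one (α := ℝ))]
    show ∀ᵐ l ∂(volume.restrict (Set.Ioc (0:ℝ) 1)), _ ≤ _
    rw [ae_restrict_iff' measurableSet_Ioc]
    filter_upwards with l hl
    have h1 := hbound l ⟨hl.1.le, hl.2⟩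
    have h2 : 0 ≤ G l := le_trans (norm_nonneg _) h1
    rw [Real.norm_eq_abs, abs_of_nonneg h2]
    exact h1
  have hsqs : 0 < Real.sqrt s := Real.sqrt_pos.2 hs
  have h72 : Real.sqrt 72 ≤ 9 := by
    rw [show (9:ℝ) = Real.sqrt 81 by
      rw [show (81:ℝ) = 9^2 by norm_num, Real.sqrt_sq (by norm_num)]]
    exact Real.sqrt_le_sqrt (by norm_num)
  have h72pos : 0 < Real.sqrt 72 := Real.sqrt_pos.2 (by norm_num)
  have hsa : Real.sqrt a = |x-y| / Real.sqrt 72 := by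
    rw [hadef, Real.sqrt_div (sq_nonneg _), Real.sqrt_sq_eq_abs]
  have hsb : Real.sqrt b = |x-y| / (2 * Real.sqrt s) := by
    rw [hbdef, Real.sqrt_div (sq_nonneg _), Real.sqrt_sq_eq_abs,
      Real.sqrt_mul (by norm_num : (0:ℝ) ≤ 4),
      show Real.sqrt 4 = 2 by
        rw [show (4:ℝ) = 2^2 by norm_num, Real.sqrt_sq (by norm_num)]]
  have e1 : (1/2) * (5 / Real.sqrt a) ≤ 23 / |x-y| := by
    rw [hsa, div_div_eq_mul_div, ← mul_div_assoc]
    gcongr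
    nlinarith [h72, h72pos]
  have e2 : (Real.sqrt s)⁻¹ * (4 / Real.sqrt b) = 8 / |x-y| := by
    rw [hsb, div_div_eq_mul_div]
    field_simp
    ring
  calc ‖∫ l in (0:ℝ)..1, f l‖ ≤ ∫ l in (0:ℝ)..1, ‖f l‖ :=
        intervalIntegral.norm_integral_le_integral_norm zero_le_one
    _ ≤ ∫ l in (0:ℝ)..1, G l :=
        intervalIntegral.integral_mono_on zero_le_one hfint.norm hGint hbound
    _ = (1/2) * (∫ l in (0:ℝ)..1, l ^ (-(3:ℝ)/2) * Real.exp (-(a/l)))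
        + (Real.sqrt s)⁻¹ * (∫ l in (0:ℝ)..1, l ^ (-(1:ℝ)/2) * Real.exp (-(b*l))) := by
        simp only [hGdef]
        rw [intervalIntegral.integral_add ((intAble ha).const_mul _) ((intBble hb).const_mul _),
          intervalIntegral.integral_const_mul, intervalIntegral.integral_const_mul]
    _ ≤ (1/2) * (5 / Real.sqrt a) + (Real.sqrt s)⁻¹ * (4 / Real.sqrt b) := by
        apply add_le_add
        · exact mul_le_mul_of_nonneg_left (intA_val ha) (by norm_num)
        · exact mul_le_mul_of_nonneg_left (intB_val hb) (by positivity)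
    _ ≤ 23 / |x-y| + 8 / |x-y| := by rw [e2]; exact add_le_add_left e1 _
    _ ≤ 40 / |x-y| := by
        rw [← add_div, div_le_div_iff₀ hr hr]
        nlinarith
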